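/- arXiv:1704.01243 — 4 statements merged into one kernel-verified Lean document; each statement's English description precedes it below -/
import Mathlib

section
/- Every finite chordal graph with at least one vertex has a simplicial vertex, i.e., a vertex v such that the induced subgraph on the neighborhood N(v) is a complete graph. -/
/-!
Induct on the stronger claim that every vertex `a` with a non-neighbour `b` has a simplicial
vertex outside `N[a]`. Let `C` be the component of `b` in `G - N[a]` and `S = N(C) ⊆ N(a)` its
attachment set. `S` is a clique: for non-adjacent `x, y ∈ S`, a shortest `x`–`y` path through `C`
closes up with `a` to an induced cycle of length at least four. The neighbours of vertices of `C`
lie in `C ∪ S`, which misses `a`. If `G[C ∪ S]` is complete, `b` is simplicial; otherwise applying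
the claim twice in `G[C ∪ S]` gives two non-adjacent simplicial vertices, one of which lies in `C`
because `S` is a clique, and a simplicial vertex of `G[C ∪ S]` lying in `C` is simplicial in `G`.
-/

/-- A simple graph is chordal if it has no induced cycle of length at least `4`
(an induced cycle is an induced-subgraph embedding of a cycle graph). -/
def Chordal {V : Type} (G : SimpleGraph V) : Prop :=
  ∀ m : ℕ, 4 ≤ m → IsEmpty (SimpleGraph.cycleGraph m ↪g G)

open SimpleGraph

namespace SimpleGraph

variable {V : Type*} {G : SimpleGraph V}

def IsSimplicial (G : SimpleGraph V) (v : V) : Prop :=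
  G.IsClique (G.neighborSet v)

theorem IsSimplicial.of_induce {s : Set V} {v : s} (hv : (G.induce s).IsSimplicial v)
    (hN : G.neighborSet v ⊆ s) : G.IsSimplicial v :=
  fun x hx y hy hxy => hv (show (G.induce s).Adj v ⟨x, hN hx⟩ from hx)
    (show (G.induce s).Adj v ⟨y, hN hy⟩ from hy) (by simpa using hxy)

theorem Walk.succ_eq_of_adj_getVert_of_length_eq_dist {u v : V} {p : G.Walk u v}
    (hp : p.length = G.dist u v) {i j : ℕ} (hij : i < j) (hj : j ≤ p.length)
    (hadj : G.Adj (p.getVert i) (p.getVert j)) : j = i + 1 := by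
  have hshort := dist_le ((p.take i).append (.cons hadj (p.drop j)))
  simp only [length_append, take_length, length_cons, drop_length] at hshort
  omega

theorem Reachable.exists_pathGraph_embedding {u v : V} (h : G.Reachable u v) :
    ∃ (n : ℕ) (f : pathGraph (n + 1) ↪g G), f 0 = u ∧ f (Fin.last n) = v := by
  obtain ⟨p, hpath, hp⟩ := h.exists_path_of_dist
  have hinj : Function.Injective fun i : Fin (p.length + 1) => p.getVert i := fun i j hij =>
    Fin.ext (hpath.getVert_injOn (by simp; omega) (by simp; omega) hij)
  refine ⟨p.length, ⟨⟨_, hinj⟩, @fun i j => ?_⟩, by simp, by simp⟩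
  simp only [Function.Embedding.coeFn_mk, pathGraph_adj]
  constructor
  · intro hadj
    rcases lt_trichotomy i.val j.val with hij | hij | hij
    · exact Or.inl (p.succ_eq_of_adj_getVert_of_length_eq_dist hp hij (by omega) hadj).symm
    · exact absurd hadj (by rw [Fin.ext hij]; exact G.irrefl)
    · exact Or.inr (p.succ_eq_of_adj_getVert_of_length_eq_dist hp hij (by omega) hadj.symm).symm
  · rintro (hij | hij)
    · exact hij ▸ p.adj_getVert_succ (by omega)
    · exact (hij ▸ p.adj_getVert_succ (by omega)).symm

theorem cycleGraph_adj_castSucc {n : ℕ} {i j : Fin (n + 1)} :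
    (cycleGraph (n + 2)).Adj i.castSucc j.castSucc ↔ (pathGraph (n + 1)).Adj i j := by
  rw [cycleGraph_adj', pathGraph_adj]
  grind [Fin.coe_sub_iff_le, Fin.coe_sub_iff_lt, Fin.val_castSucc]

theorem cycleGraph_adj_last_castSucc {n : ℕ} {i : Fin (n + 1)} :
    (cycleGraph (n + 2)).Adj (Fin.last (n + 1)) i.castSucc ↔ i = 0 ∨ i = Fin.last n := by
  rw [cycleGraph_adj']
  grind [Fin.coe_sub_iff_le, Fin.coe_sub_iff_lt, Fin.val_castSucc]

/-- The maximal such sets `C` are the components of `G - N[a]`. -/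
def PreconnectedOutsideClosedNbhd (G : SimpleGraph V) (a : V) (C : Set V) : Prop :=
  (∀ c ∈ C, c ≠ a ∧ ¬G.Adj a c) ∧ (G.induce C).Preconnected

theorem mem_or_adj_of_maximal_preconnectedOutsideClosedNbhd {a : V} {C : Set V}
    (hC : Maximal (G.PreconnectedOutsideClosedNbhd a) C) {c w : V} (hc : c ∈ C)
    (hcw : G.Adj c w) : w ∈ C ∨ G.Adj a w := by
  by_contra! ⟨hwC, haw⟩
  have hwa : w ≠ a := fun h => (hC.1.1 c hc).2 (h ▸ hcw.symm)
  have hCw : G.PreconnectedOutsideClosedNbhd a (C ∪ {w}) := by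
    refine ⟨?_, (connected_induce_union hC.1.2 .of_subsingleton hc (Set.mem_singleton w)
      hcw).preconnected⟩
    rintro z (hz | rfl)
    exacts [hC.1.1 z hz, ⟨hwa, haw⟩]
  exact hwC (hC.2 hCw Set.subset_union_left (Or.inr rfl))

end SimpleGraph

section

variable {V : Type} {G : SimpleGraph V}

theorem Chordal.comap {W : Type} {H : SimpleGraph W} (hG : Chordal G) (f : H ↪g G) : Chordal H :=
  fun m hm => ⟨fun e => (hG m hm).false (f.comp e)⟩

theorem Chordal.exists_adj_of_pathGraph (hG : Chordal G) {n : ℕ} (f : pathGraph (n + 3) ↪g G)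
    {a : V} (ha : a ∉ Set.range f) (h₀ : G.Adj a (f 0)) (hlast : G.Adj a (f (Fin.last _))) :
    ∃ i, i ≠ 0 ∧ i ≠ Fin.last _ ∧ G.Adj a (f i) := by
  by_contra! hno
  have hadj_iff : ∀ i, G.Adj a (f i) ↔ i = 0 ∨ i = Fin.last _ := fun i => by
    by_cases h0 : i = 0
    · simp [h0, h₀]
    by_cases hl : i = Fin.last _
    · simp [hl, hlast]
    simp [h0, hl, hno i h0 hl]
  have hinj : Function.Injective (Fin.snoc f a : Fin (n + 4) → V) := by
    intro i j hij
    induction i using Fin.lastCases <;> induction j using Fin.lastCases <;>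
      simp_all [Fin.snoc_castSucc, Fin.snoc_last]
  refine (hG (n + 4) (by omega)).false ⟨⟨_, hinj⟩, @fun i j => ?_⟩
  simp only [Function.Embedding.coeFn_mk]
  induction i using Fin.lastCases <;> induction j using Fin.lastCases
  · simp
  · rw [Fin.snoc_last, Fin.snoc_castSucc, hadj_iff, cycleGraph_adj_last_castSucc]
  · rw [Fin.snoc_last, Fin.snoc_castSucc, G.adj_comm, (cycleGraph _).adj_comm, hadj_iff,
      cycleGraph_adj_last_castSucc]
  · rw [Fin.snoc_castSucc, Fin.snoc_castSucc, f.map_adj_iff, cycleGraph_adj_castSucc]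

theorem Chordal.isClique_of_preconnectedOutsideClosedNbhd (hG : Chordal G) {a : V} {C : Set V}
    (hC : G.PreconnectedOutsideClosedNbhd a C) :
    G.IsClique {s | G.Adj a s ∧ ∃ c ∈ C, G.Adj s c} := by
  rintro x ⟨hax, cx, hcx, hxcx⟩ y ⟨hay, cy, hcy, hycy⟩ hxy
  by_contra hnxy
  set T : Set V := {x} ∪ C ∪ {y}
  have hT : (G.induce T).Connected :=
    connected_induce_union
      (connected_induce_union .of_subsingleton hC.2 (Set.mem_singleton x) hcx hxcx).preconnected
      .of_subsingleton (Or.inr hcy) (Set.mem_singleton y) hycy.symm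
  obtain ⟨n, f, hf0, hfl⟩ :=
    (hT.preconnected ⟨x, Or.inl (Or.inl rfl)⟩ ⟨y, Or.inr rfl⟩).exists_pathGraph_embedding
  set F := (Embedding.induce T).comp f
  have hF0 : F 0 = x := congrArg Subtype.val hf0
  have hFl : F (Fin.last n) = y := congrArg Subtype.val hfl
  obtain _ | _ | m := n
  · exact hxy (hF0.symm.trans hFl)
  · exact hnxy (hF0 ▸ hFl ▸ F.map_adj_iff.mpr (by simp [pathGraph_adj]))
  have hinterior : ∀ i, i ≠ 0 → i ≠ Fin.last _ → F i ∈ C := by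
    intro i hi0 hil
    rcases (f i).2 with (hx | hc) | hy
    · exact absurd (F.injective ((hx : F i = x).trans hF0.symm)) hi0
    · exact hc
    · exact absurd (F.injective ((hy : F i = y).trans hFl.symm)) hil
  have ha : a ∉ Set.range F := by
    rintro ⟨i, hi⟩
    by_cases hi0 : i = 0
    · exact G.irrefl (hi ▸ hi0 ▸ hF0 ▸ hax)
    by_cases hil : i = Fin.last _
    · exact G.irrefl (hi ▸ hil ▸ hFl ▸ hay)
    · exact (hC.1 _ (hinterior i hi0 hil)).1 hi
  obtain ⟨i, hi0, hil, hai⟩ := hG.exists_adj_of_pathGraph F ha (hF0 ▸ hax) (hFl ▸ hay)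
  exact (hC.1 _ (hinterior i hi0 hil)).2 hai

theorem Chordal.exists_isSimplicial_ne_not_adj [Finite V] (hG : Chordal G) {a b : V}
    (hab : a ≠ b) (hnab : ¬G.Adj a b) : ∃ z, G.IsSimplicial z ∧ z ≠ a ∧ ¬G.Adj a z := by
  induction hn : Nat.card V using Nat.strong_induction_on generalizing V with
  | _ n ih =>
    obtain ⟨C, hbC, hC⟩ :=
      (Set.toFinite {C | G.PreconnectedOutsideClosedNbhd a C}).exists_le_maximal
        (a := {b}) ⟨by simpa [eq_comm] using ⟨hab, hnab⟩, .of_subsingleton⟩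
    replace hbC : b ∈ C := hbC rfl
    set S := {s | G.Adj a s ∧ ∃ c ∈ C, G.Adj s c}
    set U := C ∪ S
    have hS : G.IsClique S := hG.isClique_of_preconnectedOutsideClosedNbhd hC.1
    have hNU : ∀ c ∈ C, G.neighborSet c ⊆ U := fun c hc w hcw =>
      (mem_or_adj_of_maximal_preconnectedOutsideClosedNbhd hC hc hcw).imp_right
        fun haw => ⟨haw, c, hc, hcw.symm⟩
    have hcard : Nat.card U < n := hn ▸ Finite.card_subtype_lt (x := a) fun haU =>
      haU.elim (fun haC => (hC.1.1 a haC).1 rfl) fun haS => G.irrefl haS.1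
    have hU : Chordal (G.induce U) := hG.comap (Embedding.induce U)
    have simplicial_of_mem : ∀ z : U, (G.induce U).IsSimplicial z → (z : V) ∈ C →
        ∃ z, G.IsSimplicial z ∧ z ≠ a ∧ ¬G.Adj a z := fun z hz hzC =>
      ⟨z, hz.of_induce (hNU z hzC), hC.1.1 z hzC⟩
    by_cases hcomplete : ∀ p q : U, p ≠ q → (G.induce U).Adj p q
    · exact simplicial_of_mem ⟨b, Or.inl hbC⟩ (fun p _ q _ hpq => hcomplete p q hpq) hbC
    push Not at hcomplete
    obtain ⟨p, q, hpq, hnpq⟩ := hcomplete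
    obtain ⟨z₁, hz₁, hz₁p, hpz₁⟩ := ih _ hcard hU hpq hnpq rfl
    obtain ⟨z₂, hz₂, hz₂z₁, hz₁z₂⟩ := ih _ hcard hU hz₁p (fun h => hpz₁ h.symm) rfl
    by_cases hz₁C : (z₁ : V) ∈ C
    · exact simplicial_of_mem z₁ hz₁ hz₁C
    by_cases hz₂C : (z₂ : V) ∈ C
    · exact simplicial_of_mem z₂ hz₂ hz₂C
    exact absurd (hS (z₁.2.resolve_left hz₁C) (z₂.2.resolve_left hz₂C)
      fun h => hz₂z₁ (Subtype.ext h.symm)) hz₁z₂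

end

/-- Dirac: every finite chordal graph with at least one vertex has a simplicial vertex,
i.e. a vertex whose neighborhood induces a complete graph. -/
theorem chordal_exists_simplicial_vertex {V : Type} [Fintype V] [Nonempty V]
    (G : SimpleGraph V) (hG : Chordal G) :
    ∃ v : V, ∀ a ∈ G.neighborSet v, ∀ b ∈ G.neighborSet v, a ≠ b → G.Adj a b := by
  by_cases hcomplete : ∀ a b : V, a ≠ b → G.Adj a b
  · obtain ⟨v⟩ := ‹Nonempty V›
    exact ⟨v, fun a _ b _ hab => hcomplete a b hab⟩
  · push Not at hcomplete
    obtain ⟨a, b, hab, hnab⟩ := hcomplete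
    obtain ⟨z, hz, -⟩ := hG.exists_isSimplicial_ne_not_adj hab hnab
    exact ⟨z, hz⟩
end

section
/- The type defect of a finite simple graph is at least the sum of the type defects of its connected components. Consequently, td(G|_W) ≥ 0 for all induced subgraphs G|_W of a graph G if and only if this holds for all W for which G|_W is connected. -/
/-- Number of connected components of a graph. -/
noncomputable def numC {V : Type} (G : SimpleGraph V) : ℕ := Nat.card G.ConnectedComponent

/-- The (modified) type of a finite simple graph `G` with `n` vertices and `e` edges:
`type(G) = e - n + C(G) + Σ_v (C(G - v) - 1)`. -/
noncomputable def gtype {V : Type} (G : SimpleGraph V) : ℤ :=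
  (Nat.card G.edgeSet : ℤ) - Nat.card V + numC G +
    ∑ᶠ v : V, ((numC (G.induce {v}ᶜ) : ℤ) - 1)

/-- The type defect of a finite simple graph: `td(G) = type(G) - (n - 2)`. -/
noncomputable def td {V : Type} (G : SimpleGraph V) : ℤ :=
  gtype G - ((Nat.card V : ℤ) - 2)

/-!
Removing a vertex `v` from a graph with `k` components only affects the component `c` of `v`, so
`C(G - v) = C(c - v) + (k - 1)`; edges and vertices add up over components. Summing, the defect of
`G` exceeds the sum of the defects of its components by exactly `(n - 2)(k - 1)`, which is
nonnegative because `1 ≤ k ≤ n` unless `n = k = 0`. For the second statement, every component of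
`G|_W` is isomorphic to a connected induced subgraph `G|_{W'}`, and `td` is invariant under
isomorphism.
-/

namespace SimpleGraph

variable {V V' : Type} {G : SimpleGraph V} {G' : SimpleGraph V'}

/-- Sets closed under adjacency are exactly the unions of connected components. -/
def IsAdjClosed (G : SimpleGraph V) (S : Set V) : Prop :=
  ∀ ⦃u v : V⦄, G.Adj u v → u ∈ S → v ∈ S

lemma ConnectedComponent.isAdjClosed_supp (c : G.ConnectedComponent) :
    G.IsAdjClosed c.supp :=
  fun _ _ huv hu => c.mem_supp_of_adj_mem_supp hu huv

namespace IsAdjClosed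

variable {S : Set V}

lemma compl (hS : G.IsAdjClosed S) : G.IsAdjClosed Sᶜ :=
  fun _ _ huv hu hv => hu (hS huv.symm hv)

lemma induce (hS : G.IsAdjClosed S) (T : Set V) :
    (G.induce T).IsAdjClosed (Subtype.val ⁻¹' S) :=
  fun _ _ huv hu => hS huv hu

lemma support_subset (hS : G.IsAdjClosed S) {u v : V} (p : G.Walk u v) (hu : u ∈ S) :
    ∀ x ∈ p.support, x ∈ S := by
  induction p with
  | nil => simpa
  | cons huv _ ih =>
    simp only [Walk.support_cons, List.mem_cons, forall_eq_or_imp]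
    exact ⟨hu, ih (hS huv hu)⟩

lemma mem_of_reachable (hS : G.IsAdjClosed S) {u v : V} (h : G.Reachable u v) (hu : u ∈ S) :
    v ∈ S :=
  h.elim fun p => hS.support_subset p hu v p.end_mem_support

lemma reachable_induce (hS : G.IsAdjClosed S) {u v : V} (h : G.Reachable u v) (hu : u ∈ S)
    (hv : v ∈ S) : (G.induce S).Reachable ⟨u, hu⟩ ⟨v, hv⟩ :=
  h.elim fun p => ⟨p.induce S (hS.support_subset p hu)⟩

lemma map_induce_injective (hS : G.IsAdjClosed S) :
    Function.Injective (ConnectedComponent.map (Embedding.induce (G := G) S).toHom) := by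
  refine ConnectedComponent.ind₂ fun ⟨u, hu⟩ ⟨v, hv⟩ h => ?_
  simp only [ConnectedComponent.map_mk, ConnectedComponent.eq] at h
  exact ConnectedComponent.sound (hS.reachable_induce h hu hv)

noncomputable def connectedComponentEquiv (hS : G.IsAdjClosed S) :
    (G.induce S).ConnectedComponent ⊕ (G.induce Sᶜ).ConnectedComponent ≃ G.ConnectedComponent :=
  Equiv.ofBijective
    (Sum.elim (ConnectedComponent.map (Embedding.induce (G := G) S).toHom)
      (ConnectedComponent.map (Embedding.induce (G := G) Sᶜ).toHom)) <| by
    refine ⟨hS.map_induce_injective.sumElim hS.compl.map_induce_injective ?_, ?_⟩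
    · refine ConnectedComponent.ind fun ⟨u, hu⟩ => ConnectedComponent.ind fun ⟨v, hv⟩ h => ?_
      simp only [ConnectedComponent.map_mk, ConnectedComponent.eq] at h
      exact hv (hS.mem_of_reachable h hu)
    · refine ConnectedComponent.ind fun v => ?_
      by_cases hv : v ∈ S
      · exact ⟨.inl (G.induce S |>.connectedComponentMk ⟨v, hv⟩), rfl⟩
      · exact ⟨.inr (G.induce Sᶜ |>.connectedComponentMk ⟨v, hv⟩), rfl⟩

end IsAdjClosed

noncomputable def Embedding.isoInduceImage (f : G ↪g G') (s : Set V) :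
    G.induce s ≃g G'.induce (f '' s) where
  toEquiv := Equiv.Set.image f s f.injective
  map_rel_iff' := by simp

variable (G)

lemma sum_connectedComponent_sum_supp [Fintype V] [Fintype G.ConnectedComponent]
    [∀ c : G.ConnectedComponent, Fintype c.supp] {M : Type*} [AddCommMonoid M] (f : V → M) :
    ∑ c : G.ConnectedComponent, ∑ v : c.supp, f v = ∑ v, f v := by
  classical
  convert Fintype.sum_fiberwise G.connectedComponentMk f <;> exact Iff.rfl

def dartEquivSigmaConnectedComponent :
    G.Dart ≃ Σ c : G.ConnectedComponent, (G.induce c.supp).Dart :=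
  (Equiv.sigmaFiberEquiv fun d : G.Dart => G.connectedComponentMk d.fst).symm.trans <|
    Equiv.sigmaCongrRight fun c =>
      { toFun := fun d => ⟨(⟨d.1.fst, d.2⟩, ⟨d.1.snd, c.mem_supp_of_adj_mem_supp d.2 d.1.adj⟩),
          d.1.adj⟩
        invFun := fun d => ⟨⟨(d.fst.1, d.snd.1), d.adj⟩, d.fst.2⟩
        left_inv := fun _ => rfl
        right_inv := fun _ => rfl }

lemma natCard_dart [Finite V] : Nat.card G.Dart = 2 * Nat.card G.edgeSet := by
  classical
  have := Fintype.ofFinite V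
  rw [Nat.card_eq_fintype_card, Nat.card_eq_fintype_card, dart_card_eq_twice_card_edges,
    edgeFinset, Set.toFinset_card]

lemma sum_natCard_edgeSet_induce_supp [Fintype V] [Fintype G.ConnectedComponent] :
    ∑ c : G.ConnectedComponent, Nat.card (G.induce c.supp).edgeSet = Nat.card G.edgeSet := by
  classical
  refine Nat.eq_of_mul_eq_mul_left two_pos ?_
  rw [Finset.mul_sum, ← natCard_dart, Nat.card_congr G.dartEquivSigmaConnectedComponent,
    Nat.card_sigma]
  simp only [natCard_dart]

end SimpleGraph

open SimpleGraph

variable {V V' : Type} {G : SimpleGraph V} {G' : SimpleGraph V'}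

lemma numC_congr (e : G ≃g G') : numC G = numC G' :=
  Nat.card_congr e.connectedComponentEquiv

lemma numC_induce_image (f : G ↪g G') (s : Set V) :
    numC (G.induce s) = numC (G'.induce (f '' s)) :=
  numC_congr (f.isoInduceImage s)

lemma numC_induce_induce (S : Set V) (T : Set S) :
    numC ((G.induce S).induce T) = numC (G.induce (Subtype.val '' T)) :=
  numC_induce_image (Embedding.induce S) T

lemma numC_eq_one_of_connected (h : G.Connected) : numC G = 1 := by
  have := h.nonempty
  have := h.preconnected.subsingleton_connectedComponent
  exact Nat.card_eq_one_iff_unique.mpr ⟨this, inferInstance⟩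

lemma SimpleGraph.ConnectedComponent.numC_induce_supp (c : G.ConnectedComponent) :
    numC (G.induce c.supp) = 1 :=
  numC_eq_one_of_connected c.connected_toSimpleGraph

lemma SimpleGraph.IsAdjClosed.numC_eq_add [Finite V] {S : Set V} (hS : G.IsAdjClosed S) :
    numC G = numC (G.induce S) + numC (G.induce Sᶜ) := by
  rw [numC, ← Nat.card_congr hS.connectedComponentEquiv, Nat.card_sum]
  rfl

lemma SimpleGraph.IsAdjClosed.numC_induce_eq_add [Finite V] {S : Set V} (hS : G.IsAdjClosed S)
    (T : Set V) : numC (G.induce T) = numC (G.induce (T ∩ S)) + numC (G.induce (T \ S)) := by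
  rw [(hS.induce T).numC_eq_add, numC_induce_induce, numC_induce_induce, ← Set.preimage_compl,
    Subtype.image_preimage_coe, Subtype.image_preimage_coe, Set.sdiff_eq]

lemma SimpleGraph.ConnectedComponent.numC_induce_compl_singleton_add_one [Finite V]
    (c : G.ConnectedComponent) (w : c.supp) :
    numC (G.induce {(w : V)}ᶜ) + 1 = numC ((G.induce c.supp).induce {w}ᶜ) + numC G := by
  have hG := c.isAdjClosed_supp.numC_eq_add
  have hGw := c.isAdjClosed_supp.numC_induce_eq_add {(w : V)}ᶜ
  rw [c.numC_induce_supp] at hG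
  have hout : ({(w : V)}ᶜ : Set V) \ c.supp = c.suppᶜ := by
    ext v
    simp only [Set.mem_sdiff, Set.mem_compl_iff, Set.mem_singleton_iff, and_iff_right_iff_imp]
    rintro hv rfl
    exact hv w.2
  have hin : ({(w : V)}ᶜ : Set V) ∩ c.supp = Subtype.val '' {w}ᶜ := by
    ext v
    simp [and_comm]
  rw [hout, hin, ← numC_induce_induce] at hGw
  omega

lemma td_eq_sum_td_induce_supp_add [Finite V] (G : SimpleGraph V) :
    td G = ∑ᶠ c : G.ConnectedComponent, td (G.induce c.supp) +
      ((Nat.card V : ℤ) - 2) * (numC G - 1) := by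
  classical
  have := Fintype.ofFinite V
  have hcomp (c : G.ConnectedComponent) : td (G.induce c.supp) =
      (Nat.card (G.induce c.supp).edgeSet : ℤ) - 2 * Nat.card c.supp + 3 +
        ∑ w : c.supp, ((numC ((G.induce c.supp).induce {w}ᶜ) : ℤ) - 1) := by
    rw [td, gtype, c.numC_induce_supp, finsum_eq_sum_of_fintype]
    ring
  have hdel : ∑ v : V, ((numC (G.induce {v}ᶜ) : ℤ) - 1) =
      ∑ c : G.ConnectedComponent, ∑ w : c.supp,
        (((numC ((G.induce c.supp).induce {w}ᶜ) : ℤ) - 1) + ((numC G : ℤ) - 1)) := by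
    rw [← G.sum_connectedComponent_sum_supp]
    refine Finset.sum_congr rfl fun c _ => Finset.sum_congr rfl fun w _ => ?_
    have := c.numC_induce_compl_singleton_add_one w
    omega
  have hvert : ∑ c : G.ConnectedComponent, (Nat.card c.supp : ℤ) = Nat.card V := by
    have := G.sum_connectedComponent_sum_supp fun _ => (1 : ℤ)
    simpa [Nat.card_eq_fintype_card] using this
  have hedge : ∑ c : G.ConnectedComponent, (Nat.card (G.induce c.supp).edgeSet : ℤ) =
      Nat.card G.edgeSet := by
    exact_mod_cast G.sum_natCard_edgeSet_induce_supp
  rw [finsum_eq_sum_of_fintype, Finset.sum_congr rfl fun c _ => hcomp c, td, gtype,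
    finsum_eq_sum_of_fintype, hdel]
  simp only [Finset.sum_add_distrib, Finset.sum_sub_distrib, Finset.sum_const, Finset.card_univ,
    ← Finset.mul_sum, ← Finset.sum_mul, nsmul_eq_mul]
  simp only [← Nat.card_eq_fintype_card, hvert, hedge, numC]
  ring

lemma numC_le_natCard [Finite V] (G : SimpleGraph V) : numC G ≤ Nat.card V :=
  Nat.card_le_card_of_surjective G.connectedComponentMk Quot.mk_surjective

lemma natCard_sub_two_mul_numC_sub_one_nonneg [Finite V] (G : SimpleGraph V) :
    0 ≤ ((Nat.card V : ℤ) - 2) * (numC G - 1) := by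
  have hle := numC_le_natCard G
  rcases Nat.eq_zero_or_pos (Nat.card V) with hV | hV
  · simp [hV, show numC G = 0 by omega]
  · have : Nonempty V := Nat.card_pos_iff.mp hV |>.1
    have hpos : 0 < numC G := Nat.card_pos
    rcases Nat.lt_or_ge (Nat.card V) 2 with h | h
    · simp [show numC G = 1 by omega]
    · exact mul_nonneg (by omega) (by omega)

lemma finsum_td_induce_supp_le [Finite V] (G : SimpleGraph V) :
    ∑ᶠ c : G.ConnectedComponent, td (G.induce c.supp) ≤ td G := by
  rw [td_eq_sum_td_induce_supp_add G]
  linarith [natCard_sub_two_mul_numC_sub_one_nonneg G]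

lemma numC_induce_compl_singleton_congr (e : G ≃g G') (v : V) :
    numC (G.induce {v}ᶜ) = numC (G'.induce {e v}ᶜ) := by
  have him : e.toEmbedding '' {v}ᶜ = {e v}ᶜ := by
    change e '' {v}ᶜ = _
    rw [Set.image_compl_eq e.bijective, Set.image_singleton]
  rw [numC_induce_image e.toEmbedding, him]

lemma td_congr (e : G ≃g G') : td G = td G' := by
  simp only [td, gtype, Nat.card_congr e.toEquiv, Nat.card_congr e.mapEdgeSet, numC_congr e,
    numC_induce_compl_singleton_congr e]
  rw [← finsum_comp_equiv e.toEquiv (f := fun w : V' => (numC (G'.induce {w}ᶜ) : ℤ) - 1)]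
  rfl

/-- The type defect of a finite simple graph is at least the sum of the type defects of
its connected components; consequently `td(G|_W) ≥ 0` for all induced subgraphs iff it
holds for all connected induced subgraphs. -/
theorem td_ge_sum_components {V : Type} [Fintype V] (G : SimpleGraph V) :
    (∑ᶠ c : G.ConnectedComponent, td (G.induce c.supp)) ≤ td G ∧
      ((∀ W : Finset V, 0 ≤ td (G.induce (W : Set V))) ↔
        ∀ W : Finset V, (G.induce (W : Set V)).Connected →
          0 ≤ td (G.induce (W : Set V))) := by
  refine ⟨finsum_td_induce_supp_le G, fun h W _ => h W, fun h W => ?_⟩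
  refine le_trans (finsum_nonneg fun c => ?_) (finsum_td_induce_supp_le _)
  have e := (Embedding.induce (G := G) W).isoInduceImage c.supp
  have hconn := e.connected_iff.mp c.connected_toSimpleGraph
  obtain ⟨F, hF⟩ := (Set.toFinite (Embedding.induce (G := G) W '' c.supp)).exists_finset_coe
  rw [td_congr e, ← hF]
  exact h F (hF ▸ hconn)
end

section
/- For integers s ≥ 2, c ≥ 1, and 1 ≤ j ≤ c, the identity Σ_{i=j-1}^{c-1} binom(i, j-1) * binom(s+i-1, i) = binom(s+j-2, j-1) * Σ_{i=j-1}^{c-1} binom(s+i-1, s+j-2) holds. -/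
/-! Both sides agree term by term: with `a = j - 1`, `b = i - (j - 1)`, `c = s - 1`, each term is
the trinomial coefficient `(a + b + c)! / (a! b! c!)`, read off as `C(a+b, a) C(a+b+c, a+b)` on the
left and as `C(a+c, a) C(a+b+c, a+c)` on the right. -/

theorem Nat.choose_mul_choose_add_add (a b c : ℕ) :
    (a + b).choose a * (a + b + c).choose (a + b) =
      (a + c).choose a * (a + b + c).choose (a + c) := by
  have hsub : a + b + c - a = b + c := by omega
  calc (a + b).choose a * (a + b + c).choose (a + b)
      = (a + b + c).choose a * (b + c).choose b := by
        rw [mul_comm, Nat.choose_mul (Nat.le_add_right a b), hsub, Nat.add_sub_cancel_left]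
    _ = (a + b + c).choose a * (b + c).choose c := by rw [Nat.choose_symm_add]
    _ = (a + c).choose a * (a + b + c).choose (a + c) := by
        rw [mul_comm _ ((a + b + c).choose (a + c)), Nat.choose_mul (Nat.le_add_right a c), hsub,
          Nat.add_sub_cancel_left]

theorem betti_binomial_identity_general (s c j : ℕ) (hs : 2 ≤ s)
    (hj : 1 ≤ j) :
    ∑ i ∈ Finset.Icc (j - 1) (c - 1), Nat.choose i (j - 1) * Nat.choose (s + i - 1) i =
      Nat.choose (s + j - 2) (j - 1) *
        ∑ i ∈ Finset.Icc (j - 1) (c - 1), Nat.choose (s + i - 1) (s + j - 2) := by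
  rw [Finset.mul_sum]
  refine Finset.sum_congr rfl fun i hi => ?_
  have hji : j - 1 ≤ i := (Finset.mem_Icc.mp hi).1
  have key := Nat.choose_mul_choose_add_add (j - 1) (i - (j - 1)) (s - 1)
  rwa [show j - 1 + (i - (j - 1)) + (s - 1) = s + i - 1 by omega,
    show j - 1 + (i - (j - 1)) = i by omega, show j - 1 + (s - 1) = s + j - 2 by omega] at key

/-- For integers `s ≥ 2`, `c ≥ 1` and `1 ≤ j ≤ c`,
`Σ_{i=j-1}^{c-1} C(i, j-1) · C(s+i-1, i) = C(s+j-2, j-1) · Σ_{i=j-1}^{c-1} C(s+i-1, s+j-2)`. -/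
theorem betti_binomial_identity (s c j : ℕ) (hs : 2 ≤ s) (hc : 1 ≤ c)
    (hj : 1 ≤ j) (hjc : j ≤ c) :
    ∑ i ∈ Finset.Icc (j - 1) (c - 1), Nat.choose i (j - 1) * Nat.choose (s + i - 1) i =
      Nat.choose (s + j - 2) (j - 1) *
        ∑ i ∈ Finset.Icc (j - 1) (c - 1), Nat.choose (s + i - 1) (s + j - 2) :=
  betti_binomial_identity_general s c j hs hj
end

section
/- The boundary of the d-simplex is the unique triangulation of a (d-1)-dimensional sphere with type defect zero: if Δ is a simplicial complex on n vertices triangulating a (d-1)-sphere and type(Δ) = dim H̃_{d-1}(Δ; k) = 1 with td(Δ) = type(Δ) - (n - d) = 0, then n = d + 1 and Δ is the boundary of the d-simplex. -/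
/-- The boundary of the `d`-simplex is the unique triangulation of a `(d-1)`-sphere with
type defect zero.  Here `Δ` is a simplicial complex on `n` vertices triangulating a
`(d-1)`-sphere (encoded combinatorially: every vertex is a face, `Δ` is pure of
dimension `d-1`, and every `(d-2)`-face lies in exactly two facets, as holds for any
sphere triangulation), its modified type is `t = dim H̃_{d-1}(Δ; k) = 1`, and its type
defect `t - (n - d)` is zero.  The conclusion is that `n = d + 1` and `Δ` consists of
all proper subsets of the vertex set, i.e. `Δ` is the boundary of the `d`-simplex. -/
theorem sphere_td_zero_boundary_simplex (n d : ℕ) (hd : 1 ≤ d)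
    (Δ : Set (Finset (Fin n)))
    (hdown : ∀ F ∈ Δ, ∀ F' ⊆ F, F' ∈ Δ)
    (hvertex : ∀ v : Fin n, {v} ∈ Δ)
    (hdim : ∀ F ∈ Δ, F.card ≤ d)
    (hpure : ∀ F ∈ Δ, ∃ G ∈ Δ, F ⊆ G ∧ G.card = d)
    (hsphere : ∀ F ∈ Δ, F.card = d - 1 →
      Nat.card {G : Finset (Fin n) // G ∈ Δ ∧ G.card = d ∧ F ⊆ G} = 2)
    (t : ℕ) (htype : t = 1) (htd : (t : ℤ) - ((n : ℤ) - d) = 0) :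
    n = d + 1 ∧ Δ = {F : Finset (Fin n) | F ≠ Finset.univ} := by
  subst htype
  have hn : n = d + 1 := by omega
  subst hn
  have facet_char : ∀ H : Finset (Fin (d+1)), H.card = d → ∃ u, H = Finset.univ.erase u := by
    intro H hH
    have hc : Hᶜ.card = 1 := by
      rw [Finset.card_compl, hH]; simp
    obtain ⟨u, hu⟩ := Finset.card_eq_one.mp hc
    refine ⟨u, ?_⟩
    have : H = {u}ᶜ := by rw [← hu, compl_compl]
    rw [this]
    ext x; simp [Finset.mem_erase, eq_comm]
  have hfacets : ∀ v : Fin (d+1), Finset.univ.erase v ∈ Δ := by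
    obtain ⟨G, hG, _, hGcard⟩ := hpure {(0 : Fin (d+1))} (hvertex _)
    obtain ⟨v0, rfl⟩ := facet_char G hGcard
    intro w
    by_cases hw : w = v0
    · subst hw; exact hG
    · set F := (Finset.univ.erase v0).erase w with hF
      have hFΔ : F ∈ Δ := hdown _ hG _ (Finset.erase_subset _ _)
      have hwmem : w ∈ Finset.univ.erase v0 := by simp [hw]
      have hFcard : F.card = d - 1 := by
        rw [hF, Finset.card_erase_of_mem hwmem, hGcard]
      have h2 := hsphere F hFΔ hFcard
      have hcand : ∀ H : Finset (Fin (d+1)), H ∈ Δ → H.card = d → F ⊆ H →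
          H = Finset.univ.erase v0 ∨ H = Finset.univ.erase w := by
        intro H hHΔ hHcard hFH
        obtain ⟨u, rfl⟩ := facet_char H hHcard
        have hu : u = v0 ∨ u = w := by
          by_contra hcon
          push_neg at hcon
          have hmem : u ∈ F := by
            simp [hF, Finset.mem_erase, hcon.1, hcon.2]
          have : u ∈ Finset.univ.erase u := hFH hmem
          simp at this
        rcases hu with h | h <;> simp [h]
      by_contra hnot
      have hall : ∀ x : {G : Finset (Fin (d+1)) // G ∈ Δ ∧ G.card = d ∧ F ⊆ G},
          x.1 = Finset.univ.erase v0 := by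
        rintro ⟨H, hHΔ, hHcard, hFH⟩
        rcases hcand H hHΔ hHcard hFH with h | h
        · exact h
        · exact absurd (h ▸ hHΔ) hnot
      have hsub : Subsingleton {G : Finset (Fin (d+1)) // G ∈ Δ ∧ G.card = d ∧ F ⊆ G} := by
        constructor
        intro a b
        ext : 1
        rw [hall a, hall b]
      have hne : Nonempty {G : Finset (Fin (d+1)) // G ∈ Δ ∧ G.card = d ∧ F ⊆ G} :=
        ⟨⟨Finset.univ.erase v0, hG, hGcard, Finset.erase_subset _ _⟩⟩
      have hle : Nat.card {G : Finset (Fin (d+1)) // G ∈ Δ ∧ G.card = d ∧ F ⊆ G} = 1 :=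
        @Nat.card_unique _ hne hsub
      omega
  refine ⟨rfl, ?_⟩
  ext F
  simp only [Set.mem_setOf_eq]
  constructor
  · intro hF hcon
    have := hdim F hF
    rw [hcon] at this
    simp at this
  · intro hne
    have hex : ∃ w, w ∉ F := by
      by_contra h
      push_neg at h
      exact hne (Finset.eq_univ_iff_forall.mpr h)
    obtain ⟨w, hw⟩ := hex
    exact hdown _ (hfacets w) F
      (fun x hx => Finset.mem_erase.mpr ⟨fun h => hw (h ▸ hx), Finset.mem_univ x⟩)
end
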